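/- For every k ≥ 1 there exist constants C > 0 and L₀ > 0 such that for every L ≥ L₀ and every λ = (λ₁,…,λ_k) ∈ ℂ^k with |λ_i − λ_j| ≥ L for all 1 ≤ i < j ≤ k, one has | D₁₁^{bulk,k}(λ₁,…,λ_k) − π^{−k}·∏_{m=2}^k ( 1 − |λ_m−λ₁|^{−4} ) | ≤ C·e^{−L²}. -/

import Mathlib

open ComplexConjugate Filter MeasureTheory Topology

noncomputable section

/-- Exponential polynomial `e_p(x) = ∑_{k=0}^p x^k/k!`. -/
def epol (p : ℕ) (x : ℂ) : ℂ := ∑ k ∈ Finset.range (p + 1), x ^ k / (Nat.factorial k : ℂ)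

/-- `f_p(x) = (p+1)·e_p(x) - x·e_{p-1}(x)`, with `e_{-1} ≡ 0`. -/
def fpol (p : ℕ) (x : ℂ) : ℂ :=
  ((p : ℂ) + 1) * epol p x - x * (if p = 0 then 0 else epol (p - 1) x)

/-- The polynomial `𝔉_n(x,y,z)`. -/
def Fgoth (n : ℕ) (x y z : ℂ) : ℂ :=
  epol n (x * y) * epol n (x * z) - epol n (x * y * z) * epol n x * (1 - x * (1 - y) * (1 - z))
    + ((1 - y) * (1 - z) / (Nat.factorial n : ℂ)) *
      (((x * y * z) ^ (n + 1) * epol n x - x ^ (n + 1) * epol n (x * y * z)) / (1 - y * z))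

/-- The weight `ω(x,y|λ,μ) = (1/π)(1+(x-λ)(y-μ))e^{-xy}`. -/
def omegaW (x y l m : ℂ) : ℂ :=
  (1 / (Real.pi : ℂ)) * (1 + (x - l) * (y - m)) * Complex.exp (-(x * y))

/-- The finite-`N` reduced kernel `κ^{(N)}(x̄,y|λ,λ̄)`. -/
def kapN (N : ℕ) (xb y l lb : ℂ) : ℂ :=
  (((N : ℂ) + 1) * Fgoth (N + 1) (l * lb) (xb / lb) (y / l)
      - l * lb * Fgoth N (l * lb) (xb / lb) (y / l)) /
    ((xb - lb) ^ 2 * (y - l) ^ 2 * fpol N (l * lb))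

/-- The finite-`N` kernel `K₁₁^{(N)}(x,x̄,y,ȳ|λ,λ̄)`. -/
def K11N (N : ℕ) (x xb y yb l lb : ℂ) : ℂ := omegaW x xb l lb * kapN N xb y l lb

/-- The finite-`N` kernel `K₁₂^{(N)}(x,x̄,y,ȳ|u,ū,v,v̄)`. -/
def K12N (N : ℕ) (x xb y yb u ub v vb : ℂ) : ℂ :=
  omegaW x xb u vb / kapN N ub v u vb *
    (kapN N ub v u vb * kapN N xb y u vb - kapN N ub y u vb * kapN N xb v u vb)

/-- `Z_N = π^N ∏_{j=1}^N j!`. -/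
def Zconst (N : ℕ) : ℂ := (Real.pi : ℂ) ^ N * ∏ j ∈ Finset.Icc 1 N, (Nat.factorial j : ℂ)

/-- Vandermonde product `∏_{0 ≤ j < i < n} (v i - v j)`. -/
def vdm (n : ℕ) (v : ℕ → ℂ) : ℂ := ∏ i ∈ Finset.range n, ∏ j ∈ Finset.range i, (v i - v j)

/-- Pads the `k` conditioned eigenvalues `lam` with the `N-k` integration variables `w`. -/
def pad (N k : ℕ) (lam : Fin k → ℂ) (w : Fin (N - k) → ℂ) (m : ℕ) : ℂ :=
  if h : m < k then lam ⟨m, h⟩ else if h2 : m - k < N - k then w ⟨m - k, h2⟩ else 0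

/-- Conditional diagonal overlap `D₁₁^{(N,k)}`. -/
def D11 (N k : ℕ) (lam : Fin k → ℂ) : ℂ :=
  (Nat.factorial N : ℂ) / (Nat.factorial (N - k) : ℂ) / Zconst N *
    Complex.exp (-(pad N k lam (fun _ => 0) 0 * conj (pad N k lam (fun _ => 0) 0))) *
    ∫ w : Fin (N - k) → ℂ,
      vdm (N - 1) (fun m => pad N k lam w (m + 1)) *
        conj (vdm (N - 1) (fun m => pad N k lam w (m + 1))) *
        ∏ m ∈ Finset.Icc 1 (N - 1),
          ((1 + (pad N k lam w m - pad N k lam w 0) *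
                (conj (pad N k lam w m) - conj (pad N k lam w 0))) *
            Complex.exp (-(pad N k lam w m * conj (pad N k lam w m))))

/-- Conditional off-diagonal overlap `D₁₂^{(N,k)}`. -/
def D12 (N k : ℕ) (lam : Fin k → ℂ) : ℂ :=
  -((Nat.factorial N : ℂ) / (Nat.factorial (N - k) : ℂ) / Zconst N *
    Complex.exp (-(pad N k lam (fun _ => 0) 0 * conj (pad N k lam (fun _ => 0) 0)
        + pad N k lam (fun _ => 0) 1 * conj (pad N k lam (fun _ => 0) 1))) *
    ∫ w : Fin (N - k) → ℂ,
      vdm (N - 1) (fun m => pad N k lam w (m + 1)) *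
        vdm (N - 1) (fun m => conj (pad N k lam w (if m = 0 then 0 else m + 1))) *
        ∏ m ∈ Finset.Icc 2 (N - 1),
          ((1 + (pad N k lam w m - pad N k lam w 0) *
                (conj (pad N k lam w m) - conj (pad N k lam w 1))) *
            Complex.exp (-(pad N k lam w m * conj (pad N k lam w m)))))

/-- `D̃₁₁^{(N,k)}` with the conjugated variables treated as independent. -/
def D11t (N k : ℕ) (lam mu : Fin k → ℂ) : ℂ :=
  (Nat.factorial N : ℂ) / (Nat.factorial (N - k) : ℂ) / Zconst N *
    Complex.exp (-(pad N k lam (fun _ => 0) 0 * pad N k mu (fun _ => 0) 0)) *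
    ∫ w : Fin (N - k) → ℂ,
      vdm (N - 1) (fun m => pad N k lam w (m + 1)) *
        vdm (N - 1) (fun m => pad N k mu (fun i => conj (w i)) (m + 1)) *
        ∏ m ∈ Finset.Icc 1 (N - 1),
          ((1 + (pad N k lam w m - pad N k lam w 0) *
                (pad N k mu (fun i => conj (w i)) m - pad N k mu (fun i => conj (w i)) 0)) *
            Complex.exp (-(pad N k lam w m * pad N k mu (fun i => conj (w i)) m)))

/-- `D̃₁₂^{(N,k)}` with the conjugated variables treated as independent. -/
def D12t (N k : ℕ) (lam mu : Fin k → ℂ) : ℂ :=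
  -((Nat.factorial N : ℂ) / (Nat.factorial (N - k) : ℂ) / Zconst N *
    Complex.exp (-(pad N k lam (fun _ => 0) 0 * pad N k mu (fun _ => 0) 0
        + pad N k lam (fun _ => 0) 1 * pad N k mu (fun _ => 0) 1)) *
    ∫ w : Fin (N - k) → ℂ,
      vdm (N - 1) (fun m => pad N k lam w (m + 1)) *
        vdm (N - 1) (fun m => pad N k mu (fun i => conj (w i)) (if m = 0 then 0 else m + 1)) *
        ∏ m ∈ Finset.Icc 2 (N - 1),
          ((1 + (pad N k lam w m - pad N k lam w 0) *
                (pad N k mu (fun i => conj (w i)) m - pad N k mu (fun i => conj (w i)) 1)) *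
            Complex.exp (-(pad N k lam w m * pad N k mu (fun i => conj (w i)) m))))

/-- Bulk weight `ω^{bulk}`. -/
def omegaBulk (u ub l lb : ℂ) : ℂ :=
  (1 / (Real.pi : ℂ)) * (1 + (u - l) * (ub - lb)) * Complex.exp (-((u - l) * (ub - lb)))

/-- Bulk reduced kernel `κ^{bulk}(ū,v|λ,λ̄) = (1+(w-1)e^w)/w²`, `w = (ū-λ̄)(v-λ)`. -/
def kapBulk (ub v l lb : ℂ) : ℂ :=
  (1 + ((ub - lb) * (v - l) - 1) * Complex.exp ((ub - lb) * (v - l))) /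
    ((ub - lb) * (v - l)) ^ 2

def K11bulk (u ub v vb l lb : ℂ) : ℂ := omegaBulk u ub l lb * kapBulk ub v l lb

def K12bulk (x xb y yb u ub v vb : ℂ) : ℂ :=
  omegaBulk x xb u vb / kapBulk ub v u vb *
    (kapBulk ub v u vb * kapBulk xb y u vb - kapBulk ub y u vb * kapBulk xb v u vb)

/-- `F(a) = (2π)^{-1/2} ∫₀^∞ e^{-(a+t)²/2} dt`, entire continuation of `(1/2)erfc(a/√2)`. -/
def Ferf (a : ℂ) : ℂ :=
  (1 / (Real.sqrt (2 * Real.pi) : ℂ)) *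
    ∫ t in Set.Ioi (0 : ℝ), Complex.exp (-((a + (t : ℂ)) ^ 2) / 2)

/-- The function `H(a,b,c,d,f)` from the edge scaling limit. -/
def Hedge (a b c d f : ℂ) : ℂ :=
  -(Real.sqrt (2 * Real.pi) : ℂ) /
      (1 - (Real.sqrt (2 * Real.pi) : ℂ) * a * Complex.exp (a ^ 2 / 2) * Ferf a) *
    deriv (fun x : ℂ =>
      Complex.exp ((a + x) ^ 2 / 2) *
        (Complex.exp (-f) * Ferf (b + x) * Ferf (c + x) - Ferf (d + x) * Ferf (a + x) +
          f * Ferf d * Ferf (a + x))) 0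

def omegaEdge (x xb l lb : ℂ) : ℂ :=
  (1 / (Real.pi : ℂ)) * (1 + (x - l) * (xb - lb)) * Complex.exp (-(x * xb))

def kapEdge (xb y l lb : ℂ) : ℂ :=
  Complex.exp (xb * y) * Hedge (l + lb) (l + xb) (y + lb) (y + xb) ((l - y) * (lb - xb)) /
    ((l - y) ^ 2 * (lb - xb) ^ 2)

def K11edge (x xb y yb l lb : ℂ) : ℂ := omegaEdge x xb l lb * kapEdge xb y l lb

def K12edge (x xb y yb u ub v vb : ℂ) : ℂ :=
  omegaEdge x xb u vb / kapEdge ub v u vb *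
    (kapEdge ub v u vb * kapEdge xb y u vb - kapEdge ub y u vb * kapEdge xb v u vb)

/-- Index embedding `Fin (k-1) → Fin k`, `i ↦ i+1`. -/
def sh1 {k : ℕ} (i : Fin (k - 1)) : Fin k := ⟨i.val + 1, by have := i.isLt; omega⟩

/-- Index embedding `Fin (k-2) → Fin k`, `i ↦ i+2`. -/
def sh2 {k : ℕ} (i : Fin (k - 2)) : Fin k := ⟨i.val + 2, by have := i.isLt; omega⟩

def ev0 {k : ℕ} (lam : Fin k → ℂ) : ℂ := if h : 0 < k then lam ⟨0, h⟩ else 0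

def ev1 {k : ℕ} (lam : Fin k → ℂ) : ℂ := if h : 1 < k then lam ⟨1, h⟩ else 0

/-- The edge overlap function `D₁₁^{edge,k}`. -/
def D11edgeF (k : ℕ) (lam : Fin k → ℂ) : ℂ :=
  (1 / (Real.sqrt (2 * Real.pi ^ 3) : ℂ)) *
    (Complex.exp (-((ev0 lam + conj (ev0 lam)) ^ 2 / 2)) -
      (Real.sqrt (2 * Real.pi) : ℂ) * (ev0 lam + conj (ev0 lam)) *
        Ferf (ev0 lam + conj (ev0 lam))) *
    Matrix.det (Matrix.of fun i j : Fin (k - 1) =>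
      K11edge (lam (sh1 i)) (conj (lam (sh1 i))) (lam (sh1 j)) (conj (lam (sh1 j)))
        (ev0 lam) (conj (ev0 lam)))

/-- The bulk overlap function `D₁₁^{bulk,k}`. -/
def D11bulkF (k : ℕ) (lam : Fin k → ℂ) : ℂ :=
  (1 / (Real.pi : ℂ)) *
    Matrix.det (Matrix.of fun i j : Fin (k - 1) =>
      K11bulk (lam (sh1 i)) (conj (lam (sh1 i))) (lam (sh1 j)) (conj (lam (sh1 j)))
        (ev0 lam) (conj (ev0 lam)))

/-- The bulk off-diagonal overlap function `D₁₂^{bulk,k}`. -/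
def D12bulkF (k : ℕ) (lam : Fin k → ℂ) : ℂ :=
  -(1 / (Real.pi : ℂ) ^ 2) * kapBulk (conj (ev0 lam)) (ev1 lam) (ev0 lam) (conj (ev1 lam)) *
    Matrix.det (Matrix.of fun i j : Fin (k - 2) =>
      K12bulk (lam (sh2 i)) (conj (lam (sh2 i))) (lam (sh2 j)) (conj (lam (sh2 j)))
        (ev0 lam) (conj (ev0 lam)) (ev1 lam) (conj (ev1 lam)))

/-- The first-order differential operator `𝔇_m = 1 - (λ_m-λ₁)(μ_m-μ₁) - (λ_m-λ₁)∂/∂λ_m`. -/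
def Dop {k : ℕ} (m : Fin k) (g : (Fin k → ℂ) → (Fin k → ℂ) → ℂ)
    (lam mu : Fin k → ℂ) : ℂ :=
  (1 - (lam m - lam ⟨0, m.pos⟩) * (mu m - mu ⟨0, m.pos⟩)) * g lam mu -
    (lam m - lam ⟨0, m.pos⟩) * deriv (fun t => g (Function.update lam m t) mu) (lam m)

/-- Holomorphic extension `ρ̃` of the bulk `k`-point Ginibre correlation function. -/
def rhoT (k : ℕ) (lam mu : Fin k → ℂ) : ℂ :=
  ((Real.pi : ℂ) ^ k)⁻¹ * Complex.exp (-(∑ m, lam m * mu m)) *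
    Matrix.det (Matrix.of fun i j : Fin k => Complex.exp (mu i * lam j))

/-- Holomorphic extension `D̃₁₁^{bulk,k}` of the bulk conditional diagonal overlap. -/
def D11tBulk (k : ℕ) (lam mu : Fin k → ℂ) : ℂ :=
  ((Real.pi : ℂ) ^ k)⁻¹ *
    (∏ i : Fin (k - 1),
      (1 + (lam (sh1 i) - ev0 lam) * (mu (sh1 i) - ev0 mu)) /
          ((lam (sh1 i) - ev0 lam) ^ 2 * (mu (sh1 i) - ev0 mu) ^ 2) *
        Complex.exp (-((lam (sh1 i) - ev0 lam) * (mu (sh1 i) - ev0 mu)))) *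
    Matrix.det (Matrix.of fun m n : Fin (k - 1) =>
      1 - (1 - (mu (sh1 m) - ev0 mu) * (lam (sh1 n) - ev0 lam)) *
        Complex.exp ((mu (sh1 m) - ev0 mu) * (lam (sh1 n) - ev0 lam)))

/-- Monic bi-orthogonal polynomials `P_k(z)` for the weight `ω(·,·|λ,λ̄)`. -/
def Ppoly (l : ℂ) (k : ℕ) (z : ℂ) : ℂ :=
  ∑ m ∈ Finset.range (k + 1), l ^ (k - m) * (fpol m (l * conj l) / fpol k (l * conj l)) * z ^ m

/-- The reduced kernel `G^{(N)}(x,y,z)` as a double sum. -/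
def Gker (N : ℕ) (x y z : ℂ) : ℂ :=
  ∑ m ∈ Finset.range (N + 1), ∑ n ∈ Finset.range (N + 1),
    fpol m x * fpol n x * y ^ m * z ^ n *
      ∑ k ∈ Finset.Icc (max m n) N,
        x ^ k / ((Nat.factorial (k + 1) : ℂ) * fpol k x * fpol (k + 1) x)

end

/-!
For `i, j ≥ 2` write `a = |λᵢ - λ₁|`, `b = |λⱼ - λ₁|`, `d = |λᵢ - λⱼ|`, all at least `L`.
The diagonal entries of the matrix `K₁₁^{bulk}(λᵢ, λⱼ | λ₁)` are real and equal
`(1 - a⁻⁴)/π + O(e^{-a²})`. The off-diagonal entries need not be small, because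
`|e^{(λ̄ᵢ-λ̄₁)(λⱼ-λ₁)}| = e^{(a² + b² - d²)/2}`, but after conjugating by a suitable diagonal
matrix, which changes neither the determinant nor the diagonal, they are `O(e^{-L²/2})`.
Every non-identity permutation moves at least two indices, so the determinant differs from the
product of the diagonal entries by `O(e^{-L²})`, and that product differs from
`∏ (1 - |λₘ - λ₁|⁻⁴)/π` by `O(e^{-L²})` as well.
-/

open Finset

section NearlyDiagonal

variable {𝕜 ι : Type*} [NormedField 𝕜] [Fintype ι] [DecidableEq ι]

theorem Matrix.det_diagonal_inv_mul_mul_diagonal (M : Matrix ι ι 𝕜) {c : ι → 𝕜}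
    (hc : ∀ i, c i ≠ 0) :
    (Matrix.diagonal c⁻¹ * M * Matrix.diagonal c).det = M.det := by
  rw [Matrix.det_mul, Matrix.det_mul, Matrix.det_diagonal, Matrix.det_diagonal, mul_right_comm,
    ← prod_mul_distrib, prod_eq_one fun i _ => by simp [hc i], one_mul]

variable {M : Matrix ι ι 𝕜} {ε : ℝ}

theorem norm_prod_perm_le_sq (hε0 : 0 ≤ ε) (hε1 : ε ≤ 1) (hdiag : ∀ i, ‖M i i‖ ≤ 1)
    (hoff : ∀ i j, i ≠ j → ‖M i j‖ ≤ ε) {σ : Equiv.Perm ι} (hσ : σ ≠ 1) :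
    ‖∏ i, M (σ i) i‖ ≤ ε ^ 2 := by
  rw [norm_prod, ← prod_mul_prod_compl σ.support]
  have hmoved : ∏ i ∈ σ.support, ‖M (σ i) i‖ ≤ ε ^ #σ.support :=
    (prod_le_prod (fun _ _ => norm_nonneg _) fun i hi =>
      hoff _ _ (Equiv.Perm.mem_support.mp hi)).trans_eq (prod_const ε)
  have hfixed : ∏ i ∈ σ.supportᶜ, ‖M (σ i) i‖ ≤ 1 :=
    prod_le_one (fun _ _ => norm_nonneg _) fun i hi => by
      rw [Equiv.Perm.notMem_support.mp (mem_compl.mp hi)]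
      exact hdiag i
  calc (∏ i ∈ σ.support, ‖M (σ i) i‖) * ∏ i ∈ σ.supportᶜ, ‖M (σ i) i‖
      ≤ ε ^ #σ.support * 1 :=
        mul_le_mul hmoved hfixed (prod_nonneg fun _ _ => norm_nonneg _) (by positivity)
    _ ≤ ε ^ 2 := by
      rw [mul_one]
      exact pow_le_pow_of_le_one hε0 hε1 (Equiv.Perm.two_le_card_support_of_ne_one hσ)

theorem norm_det_sub_prod_diag_le (hε0 : 0 ≤ ε) (hε1 : ε ≤ 1) (hdiag : ∀ i, ‖M i i‖ ≤ 1)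
    (hoff : ∀ i j, i ≠ j → ‖M i j‖ ≤ ε) :
    ‖M.det - ∏ i, M i i‖ ≤ (Fintype.card ι).factorial * ε ^ 2 := by
  have hsplit : M.det - ∏ i, M i i =
      ∑ σ ∈ univ.erase 1, Equiv.Perm.sign σ • ∏ i, M (σ i) i := by
    rw [Matrix.det_apply, ← add_sum_erase _ _ (mem_univ 1)]
    simp
  have hcard : ((univ.erase (1 : Equiv.Perm ι)).card : ℝ) ≤ (Fintype.card ι).factorial := by
    rw [← Fintype.card_perm]
    exact_mod_cast card_erase_le
  calc ‖M.det - ∏ i, M i i‖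
      ≤ ∑ σ ∈ univ.erase 1, ‖Equiv.Perm.sign σ • ∏ i, M (σ i) i‖ := hsplit ▸ norm_sum_le _ _
    _ ≤ ∑ σ ∈ univ.erase (1 : Equiv.Perm ι), ε ^ 2 := by
      refine sum_le_sum fun σ hσ => ?_
      rw [norm_units_zsmul]
      exact norm_prod_perm_le_sq hε0 hε1 hdiag hoff (ne_of_mem_erase hσ)
    _ ≤ (Fintype.card ι).factorial * ε ^ 2 := by
      rw [sum_const, nsmul_eq_mul]
      exact mul_le_mul_of_nonneg_right hcard (sq_nonneg ε)

end NearlyDiagonal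

theorem norm_prod_sub_prod_le_sum {ι R : Type*} [NormedCommRing R] [NormOneClass R]
    (s : Finset ι) {f g : ι → R} (hf : ∀ i ∈ s, ‖f i‖ ≤ 1) (hg : ∀ i ∈ s, ‖g i‖ ≤ 1) :
    ‖∏ i ∈ s, f i - ∏ i ∈ s, g i‖ ≤ ∑ i ∈ s, ‖f i - g i‖ := by
  induction s using Finset.cons_induction with
  | empty => simp
  | cons a s ha ih =>
    rw [prod_cons, prod_cons, sum_cons]
    have hfs := ih (fun i hi => hf i (mem_cons_of_mem hi)) (fun i hi => hg i (mem_cons_of_mem hi))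
    have hgs : ‖∏ i ∈ s, g i‖ ≤ 1 :=
      (Finset.norm_prod_le _ _).trans (prod_le_one (fun _ _ => norm_nonneg _)
        fun i hi => hg i (mem_cons_of_mem hi))
    calc ‖f a * ∏ i ∈ s, f i - g a * ∏ i ∈ s, g i‖
        = ‖(f a - g a) * ∏ i ∈ s, g i + f a * (∏ i ∈ s, f i - ∏ i ∈ s, g i)‖ := by ring_nf
      _ ≤ ‖f a - g a‖ * ‖∏ i ∈ s, g i‖ + ‖f a‖ * ‖∏ i ∈ s, f i - ∏ i ∈ s, g i‖ :=
        (norm_add_le _ _).trans (add_le_add (norm_mul_le _ _) (norm_mul_le _ _))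
      _ ≤ ‖f a - g a‖ * 1 + 1 * ∑ i ∈ s, ‖f i - g i‖ := by
        gcongr
        exact hf a (mem_cons_self a s)
      _ = _ := by ring

section BulkKernel

open Real

lemma sub_mul_conj_sub (u l : ℂ) : (u - l) * (conj u - conj l) = ((‖u - l‖ ^ 2 : ℝ) : ℂ) := by
  rw [← map_sub, Complex.mul_conj']
  push_cast
  rfl

lemma omegaBulk_conj (u l : ℂ) :
    omegaBulk u (conj u) l (conj l) = (((1 + ‖u - l‖ ^ 2) * exp (-‖u - l‖ ^ 2) / π : ℝ) : ℂ) := by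
  rw [omegaBulk, sub_mul_conj_sub]
  push_cast
  ring

lemma K11bulk_diag {u l : ℂ} (h : u ≠ l) :
    K11bulk u (conj u) u (conj u) l (conj l) =
      (((1 - (‖u - l‖ ^ 4)⁻¹) / π + (1 + ‖u - l‖ ^ 2) * exp (-‖u - l‖ ^ 2) / (π * ‖u - l‖ ^ 4)
        : ℝ) : ℂ) := by
  set a := ‖u - l‖
  have ha : a ≠ 0 := norm_ne_zero_iff.mpr (sub_ne_zero.mpr h)
  have hreal : (1 + a ^ 2) * exp (-a ^ 2) / π * ((1 + (a ^ 2 - 1) * exp (a ^ 2)) / (a ^ 2) ^ 2) =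
      (1 - (a ^ 4)⁻¹) / π + (1 + a ^ 2) * exp (-a ^ 2) / (π * a ^ 4) := by
    rw [exp_neg]
    field_simp
    ring
  rw [← hreal, K11bulk, omegaBulk_conj, kapBulk, mul_comm (conj u - conj l), sub_mul_conj_sub]
  push_cast
  rfl

lemma one_sub_inv_pow_four_div_pi_mem_Icc {a : ℝ} (ha : 1 ≤ a) :
    (1 - (a ^ 4)⁻¹) / π ∈ Set.Icc 0 (1 / π) := by
  have h1 : (a ^ 4)⁻¹ ≤ 1 := inv_le_one_of_one_le₀ (one_le_pow₀ ha)
  have h0 : 0 ≤ (a ^ 4)⁻¹ := by positivity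
  exact ⟨div_nonneg (by linarith) pi_pos.le, by gcongr; linarith⟩

lemma norm_K11bulk_diag_sub_le {u l : ℂ} (h : 1 ≤ ‖u - l‖) :
    ‖K11bulk u (conj u) u (conj u) l (conj l) - (((1 - (‖u - l‖ ^ 4)⁻¹) / π : ℝ) : ℂ)‖ ≤
      2 / π * exp (-‖u - l‖ ^ 2) := by
  have hne : u ≠ l := fun hul => by rw [hul, sub_self, norm_zero] at h; linarith
  set a := ‖u - l‖
  rw [K11bulk_diag hne, ← Complex.ofReal_sub, add_sub_cancel_left, Complex.norm_real,
    norm_of_nonneg (by positivity), div_le_iff₀ (by positivity)]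
  have h4 : 1 + a ^ 2 ≤ 2 * a ^ 4 := by nlinarith [one_le_pow₀ (n := 2) h]
  calc (1 + a ^ 2) * exp (-a ^ 2) ≤ 2 * a ^ 4 * exp (-a ^ 2) := by gcongr
    _ = 2 / π * exp (-a ^ 2) * (π * a ^ 4) := by field_simp

lemma norm_K11bulk_diag_le_one {u l : ℂ} (h : 1 ≤ ‖u - l‖) :
    ‖K11bulk u (conj u) u (conj u) l (conj l)‖ ≤ 1 := by
  obtain ⟨h0, h1⟩ := one_sub_inv_pow_four_div_pi_mem_Icc h
  have hexp : 2 / π * exp (-‖u - l‖ ^ 2) ≤ 2 / π :=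
    mul_le_of_le_one_right (by positivity) (exp_le_one_iff.mpr (by nlinarith))
  calc _ ≤ ‖(((1 - (‖u - l‖ ^ 4)⁻¹) / π : ℝ) : ℂ)‖ +
        ‖K11bulk u (conj u) u (conj u) l (conj l) - (((1 - (‖u - l‖ ^ 4)⁻¹) / π : ℝ) : ℂ)‖ :=
        norm_le_norm_add_norm_sub' _ _
    _ ≤ 1 / π + 2 / π := by
      rw [Complex.norm_real, norm_of_nonneg h0]
      linarith [norm_K11bulk_diag_sub_le h]
    _ ≤ 1 := by
      rw [← add_div, div_le_one pi_pos]
      linarith [pi_gt_three]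

lemma norm_kappa_le (w : ℂ) :
    ‖(1 + (w - 1) * Complex.exp w) / w ^ 2‖ ≤ (1 + (‖w‖ + 1) * exp w.re) / ‖w‖ ^ 2 := by
  rw [norm_div, norm_pow]
  gcongr
  calc ‖1 + (w - 1) * Complex.exp w‖ ≤ 1 + ‖w - 1‖ * exp w.re := by
        simpa [Complex.norm_exp] using norm_add_le (1 : ℂ) ((w - 1) * Complex.exp w)
    _ ≤ 1 + (‖w‖ + 1) * exp w.re := by
        gcongr
        simpa using norm_sub_le w 1

lemma norm_kapBulk_conj_le (u v l : ℂ) :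
    ‖kapBulk (conj u) v l (conj l)‖ ≤
      (1 + (‖u - l‖ * ‖v - l‖ + 1) * exp ((‖u - l‖ ^ 2 + ‖v - l‖ ^ 2 - ‖u - v‖ ^ 2) / 2)) /
        (‖u - l‖ * ‖v - l‖) ^ 2 := by
  have hw : conj u - conj l = conj (u - l) := (map_sub _ _ _).symm
  have hre : (conj (u - l) * (v - l)).re = (‖u - l‖ ^ 2 + ‖v - l‖ ^ 2 - ‖u - v‖ ^ 2) / 2 := by
    have := Complex.normSq_sub (v - l) (u - l)
    rw [show v - l - (u - l) = -(u - v) by ring, Complex.normSq_neg] at this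
    simp only [← Complex.sq_norm] at this
    rw [mul_comm]
    linarith
  rw [kapBulk, hw, ← hre, ← Complex.norm_conj (u - l), ← norm_mul]
  exact norm_kappa_le _

/-- Conjugating by `diag (bulkScale ‖xᵢ - λ‖)` turns the `(i, j)` entry of `K₁₁^{bulk}` into
`a e^{-a²/2} κ(λ̄ᵢ, λⱼ) (1 + b²) e^{-b²/2} / (π b)`, which is `O(e^{-(a²+b²)/2} + e^{-d²/2})`
uniformly in `a, b ≥ 1`. -/
noncomputable def bulkScale (a : ℝ) : ℝ := (1 + a ^ 2) * exp (-a ^ 2 / 2) / a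

lemma bulkScale_pos {a : ℝ} (ha : 0 < a) : 0 < bulkScale a := by
  unfold bulkScale; positivity

lemma bulk_offDiag_majorant_le {L a b d : ℝ} (hL : 1 ≤ L) (ha : L ≤ a) (hb : L ≤ b) (hd : L ≤ d) :
    (1 + a ^ 2) * exp (-a ^ 2) / π *
        ((1 + (a * b + 1) * exp ((a ^ 2 + b ^ 2 - d ^ 2) / 2)) / (a * b) ^ 2) *
        (bulkScale b / bulkScale a) ≤ 2 * exp (-L ^ 2 / 2) := by
  have ha0 : 0 < a := by linarith
  have hb0 : 0 < b := by linarith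
  have hA2 : exp (-a ^ 2) = exp (-a ^ 2 / 2) ^ 2 := by rw [← exp_nat_mul]; ring_nf
  have hcross : exp ((a ^ 2 + b ^ 2 - d ^ 2) / 2) * (exp (-a ^ 2 / 2) * exp (-b ^ 2 / 2)) =
      exp (-d ^ 2 / 2) := by
    rw [← exp_add, ← exp_add]; ring_nf
  have hsimp : (1 + a ^ 2) * exp (-a ^ 2) / π *
        ((1 + (a * b + 1) * exp ((a ^ 2 + b ^ 2 - d ^ 2) / 2)) / (a * b) ^ 2) *
        (bulkScale b / bulkScale a) =
      (1 + b ^ 2) * (exp (-a ^ 2 / 2) * exp (-b ^ 2 / 2) + (a * b + 1) * exp (-d ^ 2 / 2)) /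
        (π * a * b ^ 3) := by
    rw [← hcross, hA2, bulkScale, bulkScale]
    field_simp
  have hAB : exp (-a ^ 2 / 2) * exp (-b ^ 2 / 2) ≤ exp (-L ^ 2 / 2) := by
    rw [← exp_add, exp_le_exp]; nlinarith
  have hD : exp (-d ^ 2 / 2) ≤ exp (-L ^ 2 / 2) := exp_le_exp.mpr (by nlinarith)
  have hE := exp_pos (-L ^ 2 / 2)
  have hab : 1 ≤ a * b := by nlinarith
  rw [hsimp, div_le_iff₀ (by positivity)]
  calc (1 + b ^ 2) * (exp (-a ^ 2 / 2) * exp (-b ^ 2 / 2) + (a * b + 1) * exp (-d ^ 2 / 2))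
      ≤ (1 + b ^ 2) * (exp (-L ^ 2 / 2) + (a * b + 1) * exp (-L ^ 2 / 2)) := by gcongr
    _ ≤ 2 * b ^ 2 * (3 * (a * b) * exp (-L ^ 2 / 2)) := by gcongr <;> nlinarith
    _ ≤ 2 * exp (-L ^ 2 / 2) * (π * a * b ^ 3) := by
      nlinarith [pi_gt_three, mul_pos (mul_pos ha0 (pow_pos hb0 3)) hE]

lemma norm_K11bulk_scaled_le {L : ℝ} (hL : 1 ≤ L) {u v l : ℂ} (hu : L ≤ ‖u - l‖)
    (hv : L ≤ ‖v - l‖) (huv : L ≤ ‖u - v‖) :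
    ‖K11bulk u (conj u) v (conj v) l (conj l)‖ * (bulkScale ‖v - l‖ / bulkScale ‖u - l‖) ≤
      2 * exp (-L ^ 2 / 2) := by
  have hscale : 0 ≤ bulkScale ‖v - l‖ / bulkScale ‖u - l‖ :=
    div_nonneg (bulkScale_pos (by linarith)).le (bulkScale_pos (by linarith)).le
  refine le_trans ?_ (bulk_offDiag_majorant_le hL hu hv huv)
  gcongr
  rw [K11bulk, norm_mul, omegaBulk_conj, Complex.norm_real, Real.norm_of_nonneg (by positivity)]
  gcongr
  exact norm_kapBulk_conj_le u v l

variable {ι : Type*} [Fintype ι] [DecidableEq ι] {L : ℝ}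

lemma two_mul_exp_neg_sq_div_two_le_one (hL : 2 ≤ L) : 2 * exp (-L ^ 2 / 2) ≤ 1 := by
  have h3 : 3 ≤ exp 2 := by linarith [add_one_le_exp 2]
  have h2 : exp (-L ^ 2 / 2) ≤ (exp 2)⁻¹ := by
    rw [← exp_neg]; exact exp_le_exp.mpr (by nlinarith)
  linarith [(inv_le_inv₀ (by positivity) (by norm_num)).mpr h3]

theorem norm_det_K11bulk_sub_prod_diag_le (hL : 2 ≤ L) (x : ι → ℂ) (l : ℂ)
    (hxl : ∀ i, L ≤ ‖x i - l‖) (hx : ∀ i j, i ≠ j → L ≤ ‖x i - x j‖) :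
    let M := Matrix.of fun i j => K11bulk (x i) (conj (x i)) (x j) (conj (x j)) l (conj l)
    ‖M.det - ∏ i, M i i‖ ≤ (Fintype.card ι).factorial * (4 * exp (-L ^ 2)) := by
  intro M
  have hscale : ∀ i, 0 < bulkScale ‖x i - l‖ := fun i => bulkScale_pos (by linarith [hxl i])
  let c : ι → ℂ := fun i => (bulkScale ‖x i - l‖ : ℂ)
  have hN : ∀ i j, (Matrix.diagonal c⁻¹ * M * Matrix.diagonal c) i j =
      M i j * ((bulkScale ‖x j - l‖ / bulkScale ‖x i - l‖ : ℝ) : ℂ) := fun i j => by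
    simp only [Matrix.mul_diagonal, Matrix.diagonal_mul, Pi.inv_apply, c]
    push_cast
    ring
  have hNdiag : ∀ i, (Matrix.diagonal c⁻¹ * M * Matrix.diagonal c) i i = M i i := fun i => by
    rw [hN, div_self (hscale i).ne', Complex.ofReal_one, mul_one]
  have hε : 4 * exp (-L ^ 2) = (2 * exp (-L ^ 2 / 2)) ^ 2 := by
    rw [mul_pow, ← exp_nat_mul]; ring_nf
  rw [← Matrix.det_diagonal_inv_mul_mul_diagonal M fun i => Complex.ofReal_ne_zero.mpr (hscale i).ne',
    ← prod_congr rfl fun i _ => hNdiag i, hε]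
  refine norm_det_sub_prod_diag_le (by positivity) (two_mul_exp_neg_sq_div_two_le_one hL)
    (fun i => (hNdiag i).symm ▸ norm_K11bulk_diag_le_one (by linarith [hxl i])) fun i j hij => ?_
  rw [hN, norm_mul, Complex.norm_real, norm_of_nonneg (div_nonneg (hscale j).le (hscale i).le)]
  exact norm_K11bulk_scaled_le (by linarith) (hxl i) (hxl j) (hx i j hij)

theorem norm_det_K11bulk_sub_prod_le (hL : 2 ≤ L) (x : ι → ℂ) (l : ℂ)
    (hxl : ∀ i, L ≤ ‖x i - l‖) (hx : ∀ i j, i ≠ j → L ≤ ‖x i - x j‖) :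
    ‖(Matrix.of fun i j => K11bulk (x i) (conj (x i)) (x j) (conj (x j)) l (conj l)).det -
        ∏ i, (((1 - (‖x i - l‖ ^ 4)⁻¹) / π : ℝ) : ℂ)‖ ≤
      (4 * (Fintype.card ι).factorial + Fintype.card ι) * exp (-L ^ 2) := by
  have ha : ∀ i, 1 ≤ ‖x i - l‖ := fun i => (by linarith : (1 : ℝ) ≤ L).trans (hxl i)
  have hdiagonal : ‖∏ i, K11bulk (x i) (conj (x i)) (x i) (conj (x i)) l (conj l) -
      ∏ i, (((1 - (‖x i - l‖ ^ 4)⁻¹) / π : ℝ) : ℂ)‖ ≤ Fintype.card ι * exp (-L ^ 2) := by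
    refine (norm_prod_sub_prod_le_sum _ (fun i _ => norm_K11bulk_diag_le_one (ha i))
      fun i _ => ?_).trans ?_
    · obtain ⟨h0, h1⟩ := one_sub_inv_pow_four_div_pi_mem_Icc (ha i)
      rw [Complex.norm_real, norm_of_nonneg h0]
      exact h1.trans ((div_le_one pi_pos).mpr (by linarith [pi_gt_three]))
    · refine (sum_le_card_nsmul _ _ _ fun i _ => ?_).trans_eq (nsmul_eq_mul _ _)
      refine (norm_K11bulk_diag_sub_le (ha i)).trans ?_
      have h2π : 2 / π ≤ 1 := (div_le_one pi_pos).mpr (by linarith [pi_gt_three])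
      have hexp : exp (-‖x i - l‖ ^ 2) ≤ exp (-L ^ 2) := exp_le_exp.mpr (by nlinarith [hxl i])
      nlinarith [exp_pos (-‖x i - l‖ ^ 2)]
  have hoffdiag := norm_det_K11bulk_sub_prod_diag_le hL x l hxl hx
  simp only [Matrix.of_apply] at hoffdiag
  calc _ ≤ _ := norm_sub_le_norm_sub_add_norm_sub _ _ _
    _ ≤ _ := add_le_add hoffdiag hdiagonal
    _ = _ := by ring

end BulkKernel

/-- exact algebraic asymptotics for the bulk conditional diagonal overlap. -/
theorem statement8 (k : ℕ) (hk : 1 ≤ k) :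
    ∃ C > (0 : ℝ), ∃ L0 > (0 : ℝ), ∀ L : ℝ, L0 ≤ L → ∀ lam : Fin k → ℂ,
      (∀ i j : Fin k, i < j → L ≤ ‖lam i - lam j‖) →
      ‖D11bulkF k lam -
          (((Real.pi ^ k)⁻¹ *
            ∏ i : Fin (k - 1),
              (1 - (‖lam (sh1 i) - lam ⟨0, by omega⟩‖ ^ 4)⁻¹) : ℝ) : ℂ)‖ ≤
        C * Real.exp (-L ^ 2) := by
  refine ⟨4 * (k - 1).factorial + k, by positivity, 2, two_pos, fun L hL lam hsep => ?_⟩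
  have hsep' : ∀ p q : Fin k, p ≠ q → L ≤ ‖lam p - lam q‖ := fun p q hpq =>
    hpq.lt_or_gt.elim (hsep p q) fun h => norm_sub_rev (lam q) (lam p) ▸ hsep q p h
  have hbound := norm_det_K11bulk_sub_prod_le hL (fun i => lam (sh1 i)) (lam ⟨0, by omega⟩)
    (fun i => hsep' _ _ (by simp [sh1, Fin.ext_iff]))
    (fun i j hij => hsep' _ _ fun h => hij (Fin.ext (Nat.succ_injective (congrArg Fin.val h))))
  have hD : D11bulkF k lam = (Matrix.of fun i j : Fin (k - 1) =>
      K11bulk (lam (sh1 i)) (conj (lam (sh1 i))) (lam (sh1 j)) (conj (lam (sh1 j)))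
        (lam ⟨0, by omega⟩) (conj (lam ⟨0, by omega⟩))).det / Real.pi := by
    rw [D11bulkF, ev0, dif_pos (by omega), one_div, inv_mul_eq_div]
  have htarget : (Real.pi ^ k)⁻¹ * ∏ i : Fin (k - 1), (1 - (‖lam (sh1 i) - lam ⟨0, by omega⟩‖ ^ 4)⁻¹) =
      (∏ i : Fin (k - 1), (1 - (‖lam (sh1 i) - lam ⟨0, by omega⟩‖ ^ 4)⁻¹) / Real.pi) / Real.pi := by
    rw [prod_div_distrib, prod_const, card_univ, Fintype.card_fin, div_div, ← pow_succ,
      Nat.sub_add_cancel hk, div_eq_inv_mul]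
  rw [hD, htarget, Complex.ofReal_div, Complex.ofReal_prod, ← sub_div, norm_div, Complex.norm_real,
    Real.norm_of_nonneg Real.pi_pos.le, div_le_iff₀ Real.pi_pos]
  rw [Fintype.card_fin] at hbound
  have hk' : ((k - 1 : ℕ) : ℝ) ≤ k := by exact_mod_cast k.sub_le 1
  calc _ ≤ _ := hbound
    _ ≤ (4 * (k - 1).factorial + k) * Real.exp (-L ^ 2) := by gcongr
    _ ≤ _ := le_mul_of_one_le_right (by positivity) (by linarith [Real.pi_gt_three])
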